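/- arXiv:2007.02186 — 2 statements merged into one kernel-verified Lean document; each statement's English description precedes it below -/
import Mathlib

section
/- Let X1 and X2 be independent random vectors in ℝ^{d1} and ℝ^{d2}, let F_1 : ℝ^{d1} → B_{d1} and F_2 : ℝ^{d2} → B_{d2} be measurable maps into the open unit balls (e.g., the center-outward distribution functions of X1 and X2), and let J_1, J_2 : [0,1) → [0,∞) be score functions, with 𝐉_k(u) := J_k(‖u‖) u/‖u‖ for u ≠ 0 and 𝐉_k(0) := 0. Set Y_k := 𝐉_k(F_k(X_k)), k = 1,2. Then Y_1 and Y_2 are independent and, for any m ≥ 2, any subgroup H of S_m containing equally many even and odd permutations, and any nonnegative measurable kernels f1, f2 with E[f_k(𝐉_k(F_k(X_{k1})),…,𝐉_k(F_k(X_{km})))] < ∞ for independent copies (X_{1i},X_{2i}) of (X1,X2), the rank-based generalized symmetric covariance vanishes: μ_{f1,f2,H}(Y_1, Y_2) = 0. -/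
/-!
Pushing the product law `μ1 ⊗ μ2` forward along a map acting coordinatewise keeps it a product,
so `Y1` and `Y2` are independent. For a product law the expectation of the dependence kernel
factorizes through `(Fin m → E1 × E2) ≃ (Fin m → E1) × (Fin m → E2)` into the expectations of
the two sign-weighted sums. Each of these vanishes: permuting the coordinates preserves the
i.i.d. law `ν^⊗m`, so every term has the same expectation, weighted by `sign σ`, and the signs
over `H` cancel.
-/

open MeasureTheory Finset

/-- Sign-weighted sum of kernel evaluations over a finite set of permutations. -/
noncomputable def permSum {m : ℕ} {E : Type*} (H : Finset (Equiv.Perm (Fin m)))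
    (f : (Fin m → E) → ℝ) (x : Fin m → E) : ℝ :=
  ∑ σ ∈ H, ((Equiv.Perm.sign σ : ℤ) : ℝ) * f (fun i => x (σ i))

/-- The dependence kernel `k_{f1,f2,H}`. -/
noncomputable def depKernel {m : ℕ} {E1 E2 : Type*} (H : Finset (Equiv.Perm (Fin m)))
    (f1 : (Fin m → E1) → ℝ) (f2 : (Fin m → E2) → ℝ) (z : Fin m → E1 × E2) : ℝ :=
  permSum H f1 (fun i => (z i).1) * permSum H f2 (fun i => (z i).2)

/-- The generalized symmetric covariance `μ_{f1,f2,H}` of a joint law `μ` on `E1 × E2`. -/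
noncomputable def gsc {m : ℕ} {E1 E2 : Type*} [MeasurableSpace E1] [MeasurableSpace E2]
    (H : Finset (Equiv.Perm (Fin m)))
    (f1 : (Fin m → E1) → ℝ) (f2 : (Fin m → E2) → ℝ) (μ : Measure (E1 × E2)) : ℝ :=
  ∫ z, depKernel H f1 f2 z ∂(Measure.pi fun _ : Fin m => μ)

/-- The radial score map `𝐉(u) = J(‖u‖) u/‖u‖` for `u ≠ 0`, and `𝐉(0) = 0`. -/
noncomputable def scoreMap {d : ℕ} (J : ℝ → ℝ) (u : EuclideanSpace ℝ (Fin d)) :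
    EuclideanSpace ℝ (Fin d) :=
  letI := Classical.propDecidable (u = 0)
  if u = 0 then 0 else (J ‖u‖ / ‖u‖) • u

open Equiv.Perm (sign)

theorem Equiv.Perm.sum_sign_eq_zero {α R : Type*} [DecidableEq α] [Fintype α] [Ring R]
    (H : Finset (Equiv.Perm α))
    (hH : #(H.filter fun σ => sign σ = 1) = #(H.filter fun σ => sign σ = -1)) :
    ∑ σ ∈ H, ((sign σ : ℤ) : R) = 0 := by
  have hsign : ∀ σ : Equiv.Perm α, ((sign σ : ℤ) : R)
      = (if sign σ = 1 then 1 else 0) - (if sign σ = -1 then 1 else 0) := by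
    intro σ
    rcases Int.units_eq_one_or (sign σ) with h | h <;> simp [h]
  simp only [hsign, sum_sub_distrib, sum_boole, hH, sub_self]

section PermInvariance

variable {ι E F : Type*} [Fintype ι] [MeasurableSpace E] [NormedAddCommGroup F]
  (ν : Measure E) [SigmaFinite ν] (σ : Equiv.Perm ι)

theorem measurePreserving_comp_perm :
    MeasurePreserving (MeasurableEquiv.arrowCongr' σ.symm (MeasurableEquiv.refl E))
      (Measure.pi fun _ : ι => ν) (Measure.pi fun _ : ι => ν) :=
  measurePreserving_arrowCongr' _ _ σ.symm _ fun _ => MeasurePreserving.id ν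

theorem integral_comp_perm [NormedSpace ℝ F] (f : (ι → E) → F) :
    ∫ x, f (fun i => x (σ i)) ∂(Measure.pi fun _ => ν) = ∫ x, f x ∂(Measure.pi fun _ => ν) :=
  (measurePreserving_comp_perm ν σ).integral_comp' f

theorem MeasureTheory.Integrable.comp_perm {f : (ι → E) → F}
    (hf : Integrable f (Measure.pi fun _ => ν)) :
    Integrable (fun x => f fun i => x (σ i)) (Measure.pi fun _ => ν) :=
  (measurePreserving_comp_perm ν σ).integrable_comp_of_integrable hf

end PermInvariance

theorem integral_permSum_eq_zero {m : ℕ} {E : Type*} [MeasurableSpace E]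
    (H : Finset (Equiv.Perm (Fin m)))
    (hH : #(H.filter fun σ => sign σ = 1) = #(H.filter fun σ => sign σ = -1))
    {f : (Fin m → E) → ℝ} (ν : Measure E) [SigmaFinite ν]
    (hf : Integrable f (Measure.pi fun _ => ν)) :
    ∫ x, permSum H f x ∂(Measure.pi fun _ => ν) = 0 := by
  calc ∫ x, permSum H f x ∂(Measure.pi fun _ => ν)
      = ∑ σ ∈ H, ((sign σ : ℤ) : ℝ) * ∫ x, f x ∂(Measure.pi fun _ => ν) := by
        simp only [permSum]
        rw [integral_finsetSum _ fun σ _ => ((hf.comp_perm ν σ).const_mul _)]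
        refine sum_congr rfl fun σ _ => ?_
        rw [integral_const_mul, integral_comp_perm]
    _ = 0 := by rw [← sum_mul, Equiv.Perm.sum_sign_eq_zero H hH, zero_mul]

theorem integral_pi_prod_mul {ι E1 E2 L : Type*} [Fintype ι] [MeasurableSpace E1]
    [MeasurableSpace E2] [RCLike L] (ν1 : Measure E1) (ν2 : Measure E2) [SigmaFinite ν1]
    [SigmaFinite ν2] (g1 : (ι → E1) → L) (g2 : (ι → E2) → L) :
    ∫ z, g1 (fun i => (z i).1) * g2 (fun i => (z i).2) ∂(Measure.pi fun _ => ν1.prod ν2)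
      = (∫ x, g1 x ∂(Measure.pi fun _ => ν1)) * ∫ y, g2 y ∂(Measure.pi fun _ => ν2) := by
  rw [← integral_prod_mul]
  exact (measurePreserving_arrowProdEquivProdArrow E1 E2 ι _ _).integral_comp'
    fun w => g1 w.1 * g2 w.2

theorem gsc_prod_eq_zero {m : ℕ} {E1 E2 : Type*} [MeasurableSpace E1] [MeasurableSpace E2]
    (H : Finset (Equiv.Perm (Fin m)))
    (hH : #(H.filter fun σ => sign σ = 1) = #(H.filter fun σ => sign σ = -1))
    {f1 : (Fin m → E1) → ℝ} (f2 : (Fin m → E2) → ℝ) (ν1 : Measure E1) (ν2 : Measure E2)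
    [SigmaFinite ν1] [SigmaFinite ν2] (hf1 : Integrable f1 (Measure.pi fun _ => ν1)) :
    gsc H f1 f2 (ν1.prod ν2) = 0 := by
  simp only [gsc, depKernel]
  rw [integral_pi_prod_mul, integral_permSum_eq_zero H hH ν1 hf1, zero_mul]

theorem measurable_scoreMap {d : ℕ} {J : ℝ → ℝ} (hJ : Measurable J) :
    Measurable (scoreMap (d := d) J) :=
  Measurable.ite (measurableSet_singleton 0) measurable_const
    (((hJ.comp measurable_norm).div measurable_norm).smul measurable_id)

theorem rank_gsc_eq_zero_of_indep_general {d1 d2 m : ℕ}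
    (H : Finset (Equiv.Perm (Fin m)))
    (hH_parity : (H.filter fun σ => Equiv.Perm.sign σ = 1).card
      = (H.filter fun σ => Equiv.Perm.sign σ = -1).card)
    (f1 : (Fin m → EuclideanSpace ℝ (Fin d1)) → ℝ)
    (f2 : (Fin m → EuclideanSpace ℝ (Fin d2)) → ℝ)
    (hf1_meas : Measurable f1)
    -- the marginal laws of the independent pair (X1, X2)
    (μ1 : Measure (EuclideanSpace ℝ (Fin d1))) (μ2 : Measure (EuclideanSpace ℝ (Fin d2)))
    [IsProbabilityMeasure μ1] [IsProbabilityMeasure μ2]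
    -- measurable maps into the open unit balls (e.g. center-outward distribution functions)
    (F1 : EuclideanSpace ℝ (Fin d1) → EuclideanSpace ℝ (Fin d1)) (hF1_meas : Measurable F1)
    (F2 : EuclideanSpace ℝ (Fin d2) → EuclideanSpace ℝ (Fin d2)) (hF2_meas : Measurable F2)
    -- score functions
    (J1 J2 : ℝ → ℝ) (hJ1_meas : Measurable J1) (hJ2_meas : Measurable J2)
    -- finite expectations of the kernels evaluated at the scored ranks
    (hf1_int : Integrable (fun x : Fin m → EuclideanSpace ℝ (Fin d1)
      => f1 (fun i => scoreMap J1 (F1 (x i)))) (Measure.pi fun _ : Fin m => μ1)) :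
    ((μ1.prod μ2).map fun z => (scoreMap J1 (F1 z.1), scoreMap J2 (F2 z.2)))
        = (μ1.map fun x => scoreMap J1 (F1 x)).prod (μ2.map fun x => scoreMap J2 (F2 x))
    ∧ gsc H f1 f2
        ((μ1.prod μ2).map fun z => (scoreMap J1 (F1 z.1), scoreMap J2 (F2 z.2))) = 0 := by
  have hg1 : Measurable fun x => scoreMap J1 (F1 x) :=
    (measurable_scoreMap hJ1_meas).comp hF1_meas
  have hg2 : Measurable fun x => scoreMap J2 (F2 x) :=
    (measurable_scoreMap hJ2_meas).comp hF2_meas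
  have hindep : (μ1.prod μ2).map (fun z => (scoreMap J1 (F1 z.1), scoreMap J2 (F2 z.2)))
      = (μ1.map fun x => scoreMap J1 (F1 x)).prod (μ2.map fun x => scoreMap J2 (F2 x)) :=
    (Measure.map_prod_map μ1 μ2 hg1 hg2).symm
  refine ⟨hindep, ?_⟩
  have := Measure.isProbabilityMeasure_map (μ := μ1) hg1.aemeasurable
  have := Measure.isProbabilityMeasure_map (μ := μ2) hg2.aemeasurable
  have hscores : MeasurePreserving (fun x : Fin m → _ => fun i => scoreMap J1 (F1 (x i)))
      (Measure.pi fun _ => μ1) (Measure.pi fun _ => μ1.map fun x => scoreMap J1 (F1 x)) :=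
    measurePreserving_pi _ _ fun _ => ⟨hg1, rfl⟩
  rw [hindep]
  exact gsc_prod_eq_zero H hH_parity f2 _ _
    ((hscores.integrable_comp hf1_meas.aestronglyMeasurable).mp hf1_int)

/-- if `X1 ⟂ X2` (joint law `μ1 ⊗ μ2`), `F_k` are measurable maps into the
open unit balls, and `J_k` are score functions, then `Y_1 := 𝐉_1(F_1(X_1))` and
`Y_2 := 𝐉_2(F_2(X_2))` are independent (the joint law of `(Y1, Y2)` is the product of its
marginals) and, for any subgroup `H ⊆ S_m` with equally many even and odd permutations and
nonnegative measurable kernels with finite expectations, the rank-based GSC vanishes: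
`μ_{f1,f2,H}(Y1, Y2) = 0`. -/
theorem rank_gsc_eq_zero_of_indep {d1 d2 m : ℕ} (hm : 2 ≤ m)
    (H : Finset (Equiv.Perm (Fin m)))
    (hH_one : (1 : Equiv.Perm (Fin m)) ∈ H)
    (hH_mul : ∀ σ ∈ H, ∀ τ ∈ H, σ * τ ∈ H)
    (hH_inv : ∀ σ ∈ H, σ⁻¹ ∈ H)
    (hH_parity : (H.filter fun σ => Equiv.Perm.sign σ = 1).card
      = (H.filter fun σ => Equiv.Perm.sign σ = -1).card)
    (f1 : (Fin m → EuclideanSpace ℝ (Fin d1)) → ℝ)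
    (f2 : (Fin m → EuclideanSpace ℝ (Fin d2)) → ℝ)
    (hf1_meas : Measurable f1) (hf2_meas : Measurable f2)
    (hf1_nonneg : ∀ x, 0 ≤ f1 x) (hf2_nonneg : ∀ x, 0 ≤ f2 x)
    -- the marginal laws of the independent pair (X1, X2)
    (μ1 : Measure (EuclideanSpace ℝ (Fin d1))) (μ2 : Measure (EuclideanSpace ℝ (Fin d2)))
    [IsProbabilityMeasure μ1] [IsProbabilityMeasure μ2]
    -- measurable maps into the open unit balls (e.g. center-outward distribution functions)
    (F1 : EuclideanSpace ℝ (Fin d1) → EuclideanSpace ℝ (Fin d1)) (hF1_meas : Measurable F1)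
    (hF1_ball : ∀ x, ‖F1 x‖ < 1)
    (F2 : EuclideanSpace ℝ (Fin d2) → EuclideanSpace ℝ (Fin d2)) (hF2_meas : Measurable F2)
    (hF2_ball : ∀ x, ‖F2 x‖ < 1)
    -- score functions
    (J1 J2 : ℝ → ℝ) (hJ1_meas : Measurable J1) (hJ2_meas : Measurable J2)
    (hJ1_nonneg : ∀ u ∈ Set.Ico (0 : ℝ) 1, 0 ≤ J1 u)
    (hJ2_nonneg : ∀ u ∈ Set.Ico (0 : ℝ) 1, 0 ≤ J2 u)
    -- finite expectations of the kernels evaluated at the scored ranks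
    (hf1_int : Integrable (fun x : Fin m → EuclideanSpace ℝ (Fin d1)
      => f1 (fun i => scoreMap J1 (F1 (x i)))) (Measure.pi fun _ : Fin m => μ1))
    (hf2_int : Integrable (fun x : Fin m → EuclideanSpace ℝ (Fin d2)
      => f2 (fun i => scoreMap J2 (F2 (x i)))) (Measure.pi fun _ : Fin m => μ2)) :
    ((μ1.prod μ2).map fun z => (scoreMap J1 (F1 z.1), scoreMap J2 (F2 z.2)))
        = (μ1.map fun x => scoreMap J1 (F1 x)).prod (μ2.map fun x => scoreMap J2 (F2 x))
    ∧ gsc H f1 f2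
        ((μ1.prod μ2).map fun z => (scoreMap J1 (F1 z.1), scoreMap J2 (F2 z.2))) = 0 :=
  rank_gsc_eq_zero_of_indep_general H hH_parity f1 f2 hf1_meas μ1 μ2 F1 hF1_meas F2 hF2_meas J1 J2
    hJ1_meas hJ2_meas hf1_int
end

section
/- Let u, h ∈ ℝ^d with u ≠ 0 and ‖h‖ < ‖u‖. Then the normalized angle between u and u − h satisfies Arc(u, u − h) ≤ (2π)^{-1} arcsin(‖h‖/‖u‖). Moreover, for x ∈ [0,1], arcsin(x) ≤ (π/2) x, so Arc(u, u − h) ≤ (1/4) ‖h‖/‖u‖. -/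
/-! With `t = ‖h‖ / ‖u‖`, expanding `‖u - h‖²` shows
`(‖u‖² - ‖h‖²) ‖u - h‖² = ⟪u, u - h⟫² - (⟪u, h⟫ - ‖h‖²)²`, and `⟪u, u - h⟫ ≥ ‖u‖ (‖u‖ - ‖h‖) > 0`,
so the cosine of the angle between `u` and `u - h` is at least `√(1 - t²) = cos (arcsin t)`; as
cosine is decreasing on `[0, π]`, the angle is at most `arcsin t`. Jordan's inequality
`(2 / π) y ≤ sin y` on `[0, π / 2]`, taken at `y = arcsin x`, gives `arcsin x ≤ (π / 2) x`. -/

/-- `Arc(u,v) := (2π)⁻¹ arccos(⟨u,v⟩/(‖u‖‖v‖))` if `u ≠ 0` and `v ≠ 0`, and `0` otherwise. -/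
noncomputable def Arc {d : ℕ} (u v : EuclideanSpace ℝ (Fin d)) : ℝ :=
  letI := Classical.propDecidable (u ≠ 0 ∧ v ≠ 0)
  if u ≠ 0 ∧ v ≠ 0 then (2 * Real.pi)⁻¹ * Real.arccos ((inner ℝ u v : ℝ) / (‖u‖ * ‖v‖)) else 0

open Real RealInnerProductSpace

theorem Real.arcsin_le_pi_div_two_mul {x : ℝ} (h₀ : 0 ≤ x) (h₁ : x ≤ 1) :
    arcsin x ≤ π / 2 * x := by
  have jordan := mul_le_sin (arcsin_nonneg.2 h₀) (arcsin_le_pi_div_two x)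
  rw [sin_arcsin (by linarith) h₁, div_mul_eq_mul_div, div_le_iff₀ pi_pos] at jordan
  linarith

namespace InnerProductGeometry

variable {E : Type*} [NormedAddCommGroup E] [InnerProductSpace ℝ E]

theorem sq_sub_sq_mul_norm_sub_sq_le_inner_sq (u h : E) :
    (‖u‖ ^ 2 - ‖h‖ ^ 2) * ‖u - h‖ ^ 2 ≤ ⟪u, u - h⟫ ^ 2 := by
  rw [inner_sub_right, real_inner_self_eq_norm_sq, norm_sub_sq_real]
  nlinarith [sq_nonneg (⟪u, h⟫ - ‖h‖ ^ 2)]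

theorem inner_self_sub_pos {u h : E} (hh : ‖h‖ < ‖u‖) : 0 < ⟪u, u - h⟫ := by
  rw [inner_sub_right, real_inner_self_eq_norm_sq]
  nlinarith [real_inner_le_norm u h, norm_nonneg h]

theorem sqrt_one_sub_sq_le_cos_angle_self_sub {u h : E} (hh : ‖h‖ < ‖u‖) :
    √(1 - (‖h‖ / ‖u‖) ^ 2) ≤ cos (angle u (u - h)) := by
  have hu : 0 < ‖u‖ := (norm_nonneg h).trans_lt hh
  have hv : 0 < ‖u - h‖ := by linarith [norm_sub_norm_le u h]
  rw [cos_angle, sqrt_le_left (div_pos (inner_self_sub_pos hh) (by positivity)).le, div_pow,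
    div_pow, mul_pow, one_sub_div (by positivity), div_le_div_iff₀ (by positivity) (by positivity)]
  nlinarith [sq_sub_sq_mul_norm_sub_sq_le_inner_sq u h]

theorem angle_self_sub_le_arcsin {u h : E} (hh : ‖h‖ < ‖u‖) :
    angle u (u - h) ≤ arcsin (‖h‖ / ‖u‖) := by
  have hu : 0 < ‖u‖ := (norm_nonneg h).trans_lt hh
  refine (strictAntiOn_cos.le_iff_ge ⟨arcsin_nonneg.2 (by positivity), ?_⟩
    ⟨angle_nonneg _ _, angle_le_pi _ _⟩).1 ?_
  · linarith [arcsin_le_pi_div_two (‖h‖ / ‖u‖), pi_pos]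
  · rw [cos_arcsin]
    exact sqrt_one_sub_sq_le_cos_angle_self_sub hh

end InnerProductGeometry

open InnerProductGeometry

theorem arc_eq_inv_two_pi_mul_angle {d : ℕ} {u v : EuclideanSpace ℝ (Fin d)} (hu : u ≠ 0)
    (hv : v ≠ 0) : Arc u v = (2 * π)⁻¹ * angle u v := by
  rw [Arc, if_pos ⟨hu, hv⟩, angle]

theorem arc_perturbation_bound_general {d : ℕ} (u h : EuclideanSpace ℝ (Fin d))
    (hh : ‖h‖ < ‖u‖) :
    Arc u (u - h) ≤ (2 * Real.pi)⁻¹ * Real.arcsin (‖h‖ / ‖u‖)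
    ∧ (∀ x ∈ Set.Icc (0 : ℝ) 1, Real.arcsin x ≤ (Real.pi / 2) * x)
    ∧ Arc u (u - h) ≤ (1 / 4) * (‖h‖ / ‖u‖) := by
  have hu : 0 < ‖u‖ := (norm_nonneg h).trans_lt hh
  have hv : u - h ≠ 0 := sub_ne_zero.2 (by rintro rfl; exact lt_irrefl _ hh)
  have harc : Arc u (u - h) ≤ (2 * π)⁻¹ * arcsin (‖h‖ / ‖u‖) := by
    rw [arc_eq_inv_two_pi_mul_angle (norm_pos_iff.1 hu) hv]
    gcongr
    exact angle_self_sub_le_arcsin hh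
  refine ⟨harc, fun x hx => arcsin_le_pi_div_two_mul hx.1 hx.2, ?_⟩
  calc Arc u (u - h) ≤ (2 * π)⁻¹ * arcsin (‖h‖ / ‖u‖) := harc
    _ ≤ (2 * π)⁻¹ * (π / 2 * (‖h‖ / ‖u‖)) := by
      gcongr
      exact arcsin_le_pi_div_two_mul (by positivity) ((div_le_one hu).2 hh.le)
    _ = 1 / 4 * (‖h‖ / ‖u‖) := by field_simp; ring

/-- for `u ≠ 0` and `‖h‖ < ‖u‖`, the normalized angle between `u` and
`u − h` satisfies `Arc(u, u−h) ≤ (2π)⁻¹ arcsin(‖h‖/‖u‖)`; moreover `arcsin x ≤ (π/2)x` for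
`x ∈ [0,1]`, whence `Arc(u, u−h) ≤ (1/4)‖h‖/‖u‖`. -/
theorem arc_perturbation_bound {d : ℕ} (u h : EuclideanSpace ℝ (Fin d))
    (hu : u ≠ 0) (hh : ‖h‖ < ‖u‖) :
    Arc u (u - h) ≤ (2 * Real.pi)⁻¹ * Real.arcsin (‖h‖ / ‖u‖)
    ∧ (∀ x ∈ Set.Icc (0 : ℝ) 1, Real.arcsin x ≤ (Real.pi / 2) * x)
    ∧ Arc u (u - h) ≤ (1 / 4) * (‖h‖ / ‖u‖) :=
  arc_perturbation_bound_general u h hh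
end
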